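/- Let w : [r₁, r₂] → ℝ be continuous and nonnegative, and suppose w(r) ≤ A·∫_{r₁}^r (w(t) + B)^(1−1/(2p)) dt for all r ∈ [r₁, r₂], where A, B ≥ 0 and p > 1/2. Let w̄ be the solution of w̄' = A·(w̄ + B)^(1−1/(2p)) with w̄(r₁) = 0, namely w̄(r) = (B^(1/(2p)) + (A/(2p))·(r − r₁))^(2p) − B. Then w(r) ≤ w̄(r) for all r ∈ [r₁, r₂]. -/
import Mathlib


open MeasureTheory Set Filter

private lemma gronwall_aux (r₁ r₂ A B p : ℝ) (hr : r₁ ≤ r₂)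
    (hA : 0 ≤ A) (hB : 0 < B) (hp : 1 / 2 < p) (w : ℝ → ℝ)
    (hw : ContinuousOn w (Set.Icc r₁ r₂)) (hw0 : ∀ r ∈ Set.Icc r₁ r₂, 0 ≤ w r)
    (hineq : ∀ r ∈ Set.Icc r₁ r₂,
      w r ≤ A * ∫ t in r₁..r, (w t + B) ^ (1 - 1 / (2 * p))) :
    ∀ r ∈ Set.Icc r₁ r₂,
      w r ≤ (B ^ (1 / (2 * p)) + A / (2 * p) * (r - r₁)) ^ (2 * p) - B := by
  have h2p : (0:ℝ) < 2 * p := by linarith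
  set c : ℝ := 1 / (2 * p) with hc
  have hc0 : 0 < c := by positivity
  have hc1 : c < 1 := by rw [hc, div_lt_one h2p]; linarith
  set f : ℝ → ℝ := fun t => (w t + B) ^ (1 - c) with hf
  have hwB : ∀ t ∈ Icc r₁ r₂, 0 < w t + B := fun t ht => by linarith [hw0 t ht]
  have hfc : ContinuousOn f (Icc r₁ r₂) :=
    (hw.add continuousOn_const).rpow_const fun x hx => Or.inr (by linarith)
  have hfnn : ∀ t ∈ Icc r₁ r₂, 0 ≤ f t := fun t ht =>
    Real.rpow_nonneg (hwB t ht).le _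
  set v : ℝ → ℝ := fun r => A * ∫ t in r₁..r, f t with hv
  have hint : ∀ r ∈ Icc r₁ r₂, IntervalIntegrable f volume r₁ r := by
    intro r hrr
    apply ContinuousOn.intervalIntegrable
    rw [uIcc_of_le hrr.1]
    exact hfc.mono (Icc_subset_Icc_right hrr.2)
  have hwv : ∀ r ∈ Icc r₁ r₂, w r ≤ v r := hineq
  have hv0 : ∀ r ∈ Icc r₁ r₂, 0 ≤ v r := by
    intro r hrr
    apply mul_nonneg hA
    apply intervalIntegral.integral_nonneg hrr.1
    intro t ht
    exact hfnn t ⟨ht.1, ht.2.trans hrr.2⟩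
  have hvB : ∀ r ∈ Icc r₁ r₂, 0 < v r + B := fun r hrr => by linarith [hv0 r hrr]
  have hderiv : ∀ x ∈ Icc r₁ r₂, HasDerivWithinAt v (A * f x) (Icc r₁ r₂) x := by
    intro x hx
    haveI : Fact (x ∈ Icc r₁ r₂) := ⟨hx⟩
    have h1 : StronglyMeasurableAtFilter f (nhdsWithin x (Icc r₁ r₂)) volume :=
      ⟨Icc r₁ r₂, self_mem_nhdsWithin, hfc.aestronglyMeasurable measurableSet_Icc⟩
    exact (intervalIntegral.integral_hasDerivWithinAt_right (hint x hx) h1 (hfc x hx)).const_mul A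
  set φ : ℝ → ℝ := fun r => (v r + B) ^ c with hφ
  have hφderiv : ∀ x ∈ Icc r₁ r₂,
      HasDerivWithinAt φ ((fun x => (A * f x) * c * (v x + B) ^ (c - 1)) x) (Icc r₁ r₂) x := by
    intro x hx
    exact ((hderiv x hx).add_const B).rpow_const (Or.inl (ne_of_gt (hvB x hx)))
  have hbound : ∀ x ∈ Ico r₁ r₂,
      ‖(fun x => (A * f x) * c * (v x + B) ^ (c - 1)) x‖ ≤ A * c := by
    intro x hx
    have hx' : x ∈ Icc r₁ r₂ := Ico_subset_Icc_self hx
    have hP : 0 < (v x + B) ^ (c - 1) := Real.rpow_pos_of_pos (hvB x hx') _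
    have h1 : f x ≤ (v x + B) ^ (1 - c) :=
      Real.rpow_le_rpow (hwB x hx').le (by linarith [hwv x hx']) (by linarith)
    have hkey : (v x + B) ^ (1 - c) * (v x + B) ^ (c - 1) = 1 := by
      rw [← Real.rpow_add (hvB x hx')]
      norm_num
    rw [Real.norm_eq_abs, abs_of_nonneg
      (mul_nonneg (mul_nonneg (mul_nonneg hA (hfnn x hx')) hc0.le) hP.le)]
    calc (A * f x) * c * (v x + B) ^ (c - 1)
        ≤ (A * ((v x + B) ^ (1 - c))) * c * (v x + B) ^ (c - 1) := by
          apply mul_le_mul_of_nonneg_right _ hP.le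
          apply mul_le_mul_of_nonneg_right _ hc0.le
          exact mul_le_mul_of_nonneg_left h1 hA
      _ = A * c * ((v x + B) ^ (1 - c) * (v x + B) ^ (c - 1)) := by ring
      _ = A * c := by rw [hkey, mul_one]
  have hmvt := norm_image_sub_le_of_norm_deriv_le_segment' hφderiv hbound
  have hφr₁ : φ r₁ = B ^ c := by
    simp only [hφ, hv, intervalIntegral.integral_same, mul_zero, zero_add]
  intro r hrr
  have h3 : φ r ≤ B ^ c + A * c * (r - r₁) := by
    have := hmvt r hrr
    rw [Real.norm_eq_abs] at this
    have := (le_abs_self (φ r - φ r₁)).trans this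
    rw [hφr₁] at this
    linarith
  have hφnn : 0 ≤ φ r := Real.rpow_nonneg (hvB r hrr).le _
  have h4 : (φ r) ^ (2 * p) ≤ (B ^ c + A * c * (r - r₁)) ^ (2 * p) :=
    Real.rpow_le_rpow hφnn h3 h2p.le
  have h5 : (φ r) ^ (2 * p) = v r + B := by
    have hre : φ r = (v r + B) ^ c := rfl
    rw [hre, ← Real.rpow_mul (hvB r hrr).le, hc, one_div,
      inv_mul_cancel₀ (ne_of_gt h2p), Real.rpow_one]
  have h6 : A * c = A / (2 * p) := by rw [hc]; ring
  have := hwv r hrr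
  rw [h6] at h4
  linarith [h5 ▸ h4]

theorem gronwall_comparison_explicit (r₁ r₂ A B p : ℝ) (hr : r₁ ≤ r₂)
    (hA : 0 ≤ A) (hB : 0 ≤ B) (hp : 1 / 2 < p) (w : ℝ → ℝ)
    (hw : ContinuousOn w (Set.Icc r₁ r₂)) (hw0 : ∀ r ∈ Set.Icc r₁ r₂, 0 ≤ w r)
    (hineq : ∀ r ∈ Set.Icc r₁ r₂,
      w r ≤ A * ∫ t in r₁..r, (w t + B) ^ (1 - 1 / (2 * p))) :
    ∀ r ∈ Set.Icc r₁ r₂,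
      w r ≤ (B ^ (1 / (2 * p)) + A / (2 * p) * (r - r₁)) ^ (2 * p) - B := by
  intro r hrr
  have h2p : (0:ℝ) < 2 * p := by linarith
  have hexp : (0:ℝ) ≤ 1 - 1 / (2 * p) := by
    have : 1 / (2 * p) < 1 := by rw [div_lt_one h2p]; linarith
    linarith
  have key : ∀ ε : ℝ, ε ∈ Ioi (0:ℝ) →
      w r ≤ ((B + ε) ^ (1 / (2 * p)) + A / (2 * p) * (r - r₁)) ^ (2 * p) - (B + ε) := by
    intro ε hε
    rw [mem_Ioi] at hε
    apply gronwall_aux r₁ r₂ A (B + ε) p hr hA (by linarith) hp w hw hw0 _ r hrr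
    intro s hs
    refine (hineq s hs).trans ?_
    apply mul_le_mul_of_nonneg_left _ hA
    apply intervalIntegral.integral_mono_on hs.1
    · apply ContinuousOn.intervalIntegrable
      rw [uIcc_of_le hs.1]
      exact ((hw.mono (Icc_subset_Icc_right hs.2)).add continuousOn_const).rpow_const
        fun x hx => Or.inr hexp
    · apply ContinuousOn.intervalIntegrable
      rw [uIcc_of_le hs.1]
      exact ((hw.mono (Icc_subset_Icc_right hs.2)).add continuousOn_const).rpow_const
        fun x hx => Or.inr hexp
    · intro t ht
      have ht' : t ∈ Icc r₁ r₂ := Icc_subset_Icc_right hs.2 ht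
      exact Real.rpow_le_rpow (by linarith [hw0 t ht']) (by linarith) hexp
  have hcont : ContinuousAt
      (fun ε : ℝ => ((B + ε) ^ (1 / (2 * p)) + A / (2 * p) * (r - r₁)) ^ (2 * p) - (B + ε)) 0 := by
    have h1 : ContinuousAt (fun ε : ℝ => B + ε) 0 := by fun_prop
    have h3 : ContinuousAt (fun ε : ℝ => (B + ε) ^ (1 / (2 * p))) 0 :=
      h1.rpow_const (Or.inr (one_div_nonneg.mpr h2p.le))
    have h4 : ContinuousAt
        (fun ε : ℝ => ((B + ε) ^ (1 / (2 * p)) + A / (2 * p) * (r - r₁)) ^ (2 * p)) 0 :=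
      (h3.add continuousAt_const).rpow_const (Or.inr h2p.le)
    exact h4.sub h1
  have htend := (hcont.tendsto).mono_left (nhdsWithin_le_nhds (s := Ioi (0:ℝ)))
  have hle := ge_of_tendsto htend (eventually_nhdsWithin_of_forall key)
  simpa using hle
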